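/- Under the envelope setup with P self-adjoint nonexpansive and nonsingular, the set of stationary points {x : ∇F(x) = 0} of the envelope F(x) = ½⟨Px,x⟩ - f₂(Px+q) equals the fixed-point set {x : S₂(Px+q) = x} of S₂∘S₁. If moreover P is positive definite, this set also equals the set of global minimizers of F. -/

import Mathlib

open scoped RealInnerProductSpace

/-- A mapping is nonexpansive if it is 1-Lipschitz. -/
def Nonexpansive {n : ℕ} (T : EuclideanSpace ℝ (Fin n) → EuclideanSpace ℝ (Fin n)) : Prop :=
  ∀ x y, ‖T x - T y‖ ≤ ‖x - y‖

/-!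
The gradient of the envelope `F x = ½⟪P x, x⟫ - f₂ (P x + q)` is `P (x - S₂ (P x + q))`, which
vanishes exactly at the fixed points because `P` is injective. For positive `P`, the descent
lemma for `f₂` (its gradient `S₂` is 1-Lipschitz) and the bound `‖P d‖² ≤ ⟪P d, d⟫` (valid for
`0 ≤ P ≤ 1`) show that `F` lies above its tangent planes. Hence stationary points are global
minimizers, and conversely global minimizers are stationary by Fermat's rule.
-/

variable {E : Type*} [NormedAddCommGroup E] [InnerProductSpace ℝ E]

namespace ContinuousLinearMap

theorem IsPositive.inner_sq_le_inner_self_mul {T : E →L[ℝ] E} (hT : T.IsPositive) (x y : E) :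
    ⟪T x, y⟫ ^ 2 ≤ ⟪T x, x⟫ * ⟪T y, y⟫ := by
  have hsymm : ⟪T y, x⟫ = ⟪T x, y⟫ := by rw [hT.inner_left_eq_inner_right, real_inner_comm]
  have hquad : ∀ t : ℝ, 0 ≤ ⟪T y, y⟫ * (t * t) + 2 * ⟪T x, y⟫ * t + ⟪T x, x⟫ := fun t => by
    have h := hT.inner_nonneg_left (x + t • y)
    simp only [map_add, map_smul, inner_add_left, inner_add_right, real_inner_smul_left,
      real_inner_smul_right, hsymm] at h
    linarith
  have := discrim_le_zero hquad
  rw [discrim] at this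
  linarith

theorem IsPositive.norm_sq_le_inner_self {T : E →L[ℝ] E} (hT : T.IsPositive)
    (hT₁ : ∀ x, ‖T x‖ ≤ ‖x‖) (x : E) : ‖T x‖ ^ 2 ≤ ⟪T x, x⟫ := by
  -- Cauchy–Schwarz for the form `⟪T ·, ·⟫` at `y = T x` gives `‖T x‖⁴ ≤ ⟪T x, x⟫ ‖T x‖²`.
  have hcs := hT.inner_sq_le_inner_self_mul x (T x)
  have hTT : ⟪T (T x), T x⟫ ≤ ‖T x‖ ^ 2 :=
    calc ⟪T (T x), T x⟫ ≤ ‖T (T x)‖ * ‖T x‖ := real_inner_le_norm _ _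
      _ ≤ ‖T x‖ * ‖T x‖ := by gcongr; exact hT₁ _
      _ = ‖T x‖ ^ 2 := (sq _).symm
  rw [real_inner_self_eq_norm_sq] at hcs
  rcases (norm_nonneg (T x)).eq_or_lt with h0 | hpos
  · rw [← h0]; simpa using hT.inner_nonneg_left x
  · have := hcs.trans (mul_le_mul_of_nonneg_left hTT (hT.inner_nonneg_left x))
    nlinarith [pow_pos hpos 2]

end ContinuousLinearMap

variable [CompleteSpace E]

theorem le_add_inner_add_half_mul_sq_of_hasGradientAt {f : E → ℝ} {g : E → E} {K : NNReal}
    (hf : ∀ x, HasGradientAt f (g x) x) (hg : LipschitzWith K g) (u v : E) :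
    f v ≤ f u + ⟪g u, v - u⟫ + K / 2 * ‖v - u‖ ^ 2 := by
  set d := v - u
  -- `φ` is monotone on `[0, ∞)`: its derivative is `K t ‖d‖² - ⟪g (u + t d) - g u, d⟫ ≥ 0`
  set φ : ℝ → ℝ := fun t => t * ⟪g u, d⟫ + K * t ^ 2 / 2 * ‖d‖ ^ 2 - f (u + t • d)
  have hφ' : ∀ t : ℝ, HasDerivAt φ (⟪g u, d⟫ + K * t * ‖d‖ ^ 2 - ⟪g (u + t • d), d⟫) t := by
    intro t
    have hline : HasDerivAt (fun t : ℝ => u + t • d) d t := by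
      simpa using ((hasDerivAt_id t).smul_const d).const_add u
    have hfline := (hf (u + t • d)).hasFDerivAt.comp_hasDerivAt t hline
    rw [InnerProductSpace.toDual_apply_apply] at hfline
    have := (((hasDerivAt_id t).mul_const ⟪g u, d⟫).add
      ((((hasDerivAt_pow 2 t).const_mul (K : ℝ)).div_const 2).mul_const (‖d‖ ^ 2))).sub hfline
    exact this.congr_deriv (by push_cast; ring)
  have hmono : MonotoneOn φ (Set.Ici 0) := by
    refine monotoneOn_of_hasDerivWithinAt_nonneg (convex_Ici 0)
      (fun t _ => (hφ' t).continuousAt.continuousWithinAt)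
      (fun t _ => (hφ' t).hasDerivWithinAt) fun t ht => ?_
    rw [interior_Ici, Set.mem_Ioi] at ht
    have hdist : ‖g (u + t • d) - g u‖ ≤ K * (t * ‖d‖) := by
      simpa [norm_smul, abs_of_pos ht] using hg.norm_sub_le (u + t • d) u
    have := real_inner_le_norm (g (u + t • d) - g u) d
    rw [inner_sub_left] at this
    nlinarith [mul_le_mul_of_nonneg_right hdist (norm_nonneg d)]
  have := hmono Set.self_mem_Ici (zero_le_one' ℝ) zero_le_one
  simp only [φ, zero_smul, add_zero, one_smul, d, add_sub_cancel] at this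
  linarith

noncomputable def envelope (P : E →L[ℝ] E) (q : E) (f : E → ℝ) (x : E) : ℝ :=
  1 / 2 * ⟪P x, x⟫ - f (P x + q)

section Envelope

variable {P : E →L[ℝ] E} {q : E} {f : E → ℝ} {g : E → E}

theorem hasGradientAt_envelope (hP : P.IsSymmetric) (hf : ∀ x, HasGradientAt f (g x) x) (x : E) :
    HasGradientAt (envelope P q f) (P (x - g (P x + q))) x := by
  have hquad : HasFDerivAt (fun x => ⟪P x, x⟫)
      ((fderivInnerCLM ℝ (P x, x)).comp (P.prod (ContinuousLinearMap.id ℝ E))) x :=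
    P.hasFDerivAt.inner ℝ (hasFDerivAt_id x)
  have hcomp : HasFDerivAt (fun x => f (P x + q))
      ((InnerProductSpace.toDual ℝ E (g (P x + q))).comp P) x :=
    (hf (P x + q)).hasFDerivAt.comp x (P.hasFDerivAt.add_const q)
  refine ((hquad.const_mul (1 / 2 : ℝ)).sub hcomp).congr_fderiv ?_
  ext v
  simp only [sub_apply, smul_apply, ContinuousLinearMap.comp_apply,
    ContinuousLinearMap.prod_apply, ContinuousLinearMap.coe_id', id_eq, fderivInnerCLM_apply,
    InnerProductSpace.toDual_apply_apply, smul_eq_mul]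
  have hP' : ∀ a b, ⟪P a, b⟫ = ⟪a, P b⟫ := hP
  rw [map_sub, inner_sub_left, hP' v, real_inner_comm v, hP' (g _)]
  ring

theorem envelope_add_inner_le (hP : P.IsPositive) (hP₁ : ∀ x, ‖P x‖ ≤ ‖x‖)
    (hf : ∀ x, HasGradientAt f (g x) x) (hg : LipschitzWith 1 g) (x y : E) :
    envelope P q f x + ⟪P (x - g (P x + q)), y - x⟫ ≤ envelope P q f y := by
  set d := y - x
  have hdescent := le_add_inner_add_half_mul_sq_of_hasGradientAt hf hg (P x + q) (P y + q)
  have hPd : P y + q - (P x + q) = P d := by rw [map_sub]; abel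
  have hquad : ⟪P y, y⟫ = ⟪P x, x⟫ + 2 * ⟪P x, d⟫ + ⟪P d, d⟫ := by
    have hy : y = x + d := (add_sub_cancel x y).symm
    have hsymm : ⟪P d, x⟫ = ⟪P x, d⟫ := by
      rw [hP.inner_left_eq_inner_right, real_inner_comm]
    rw [hy, map_add, inner_add_left, inner_add_right, inner_add_right, hsymm]
    ring
  have hgrad : ⟪P (x - g (P x + q)), d⟫ = ⟪P x, d⟫ - ⟪g (P x + q), P d⟫ := by
    rw [map_sub, inner_sub_left, hP.inner_left_eq_inner_right (g _)]
  -- the descent lemma loses `½‖P d‖²`, which the quadratic part `½⟪P d, d⟫` pays for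
  have hnorm := hP.norm_sq_le_inner_self hP₁ d
  rw [hPd] at hdescent
  simp only [envelope, hquad, hgrad]
  push_cast at hdescent
  linarith

theorem forall_envelope_le_iff (hP : P.IsPositive) (hP₁ : ∀ x, ‖P x‖ ≤ ‖x‖)
    (hf : ∀ x, HasGradientAt f (g x) x) (hg : LipschitzWith 1 g) (x : E) :
    (∀ y, envelope P q f x ≤ envelope P q f y) ↔ P (x - g (P x + q)) = 0 := by
  constructor
  · intro hmin
    have hzero := IsLocalMin.hasFDerivAt_eq_zero (Filter.Eventually.of_forall hmin)
      (hasGradientAt_envelope hP.isSymmetric hf x).hasFDerivAt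
    exact (map_eq_zero_iff _ (InnerProductSpace.toDual ℝ E).injective).mp hzero
  · intro hstat y
    have := envelope_add_inner_le (q := q) hP hP₁ hf hg x y
    rwa [hstat, inner_zero_left, add_zero] at this

end Envelope

theorem Nonexpansive.lipschitzWith_one {n : ℕ}
    {T : EuclideanSpace ℝ (Fin n) → EuclideanSpace ℝ (Fin n)} (hT : Nonexpansive T) : LipschitzWith 1 T :=
  LipschitzWith.of_dist_le_mul fun x y => by simpa [dist_eq_norm] using hT x y

theorem stmt9 {n : ℕ}
    (P : EuclideanSpace ℝ (Fin n) →L[ℝ] EuclideanSpace ℝ (Fin n))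
    (hPsa : ∀ x y, ⟪P x, y⟫ = ⟪x, P y⟫) (hPne : ∀ x, ‖P x‖ ≤ ‖x‖)
    (hPinj : Function.Injective P)
    (q : EuclideanSpace ℝ (Fin n))
    (f₂ : EuclideanSpace ℝ (Fin n) → ℝ)
    (S₂ : EuclideanSpace ℝ (Fin n) → EuclideanSpace ℝ (Fin n))
    (hf₂ : ∀ x, HasGradientAt f₂ (S₂ x) x)
    (hS₂ : Nonexpansive S₂)
    (F : EuclideanSpace ℝ (Fin n) → ℝ)
    (hF : ∀ x, F x = 1/2 * ⟪P x, x⟫ - f₂ (P x + q)) :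
    {x | P (x - S₂ (P x + q)) = 0} = {x | S₂ (P x + q) = x} ∧
    ((∃ m > (0:ℝ), ∀ x, m * ‖x‖^2 ≤ ⟪P x, x⟫) →
      {x | ∀ y, F x ≤ F y} = {x | S₂ (P x + q) = x}) := by
  have hstationary : ∀ x, P (x - S₂ (P x + q)) = 0 ↔ S₂ (P x + q) = x := fun x => by
    rw [map_eq_zero_iff P hPinj, sub_eq_zero, eq_comm]
  refine ⟨Set.ext hstationary, fun ⟨m, hm, hmP⟩ => ?_⟩
  have hPpos : P.IsPositive :=
    P.isPositive_iff.2 ⟨hPsa, fun x => (by positivity : 0 ≤ m * ‖x‖ ^ 2).trans (hmP x)⟩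
  obtain rfl : F = envelope P q f₂ := funext hF
  ext x
  exact (forall_envelope_le_iff hPpos hPne hf₂ hS₂.lipschitzWith_one x).trans (hstationary x)
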